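/- Let k ≥ 2 be an integer and σ ∈ (0,1]. There is a constant C depending only on k with the following property. Let h ∈ (0,1], I = [a, a+h], and let e : ℝ → ℝ be (k+2)-times continuously differentiable on a neighborhood of I, and let M ≥ 0 satisfy: (i) sup_{y ∈ I} |e^{(k+2)}(y)| ≤ M; (ii) |e^{(s)}(a)| ≤ M h^{k+1+σ−s} and |e^{(s)}(a+h)| ≤ M h^{k+1+σ−s} for every integer s with 0 ≤ s ≤ k−1 and k−s even; (iii) |e^{(s)}(a + h/2)| ≤ M h^{k+1+σ−s} for every integer s with 0 ≤ s ≤ k and k−s even. Then there exists a real number γ (depending on e and h) such that for every integer s with 0 ≤ s ≤ k, and with the additional restriction s ≥ 1 when k is odd, and for every x ∈ I: |e^{(s)}(x) − γ · (2/h)^s · F_{k−s}(2(x−a)/h − 1)| ≤ C M h^{k+1+σ−s}. -/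

import Mathlib

open Polynomial Set intervalIntegral

private lemma polyint (P : Polynomial ℝ) (a b : ℝ) :
    ∫ x in a..b, (P.derivative).eval x = P.eval b - P.eval a :=
  integral_eq_sub_of_hasDerivAt (fun x _ => P.hasDerivAt x)
    ((P.derivative.continuous).intervalIntegrable a b)

private lemma polyuniq (P Q : Polynomial ℝ) (hd : P.derivative = Q.derivative)
    (hi : ∫ x in (-1:ℝ)..1, P.eval x = ∫ x in (-1:ℝ)..1, Q.eval x) : P = Q := by
  have h0 : (P - Q).derivative = 0 := by rw [derivative_sub, hd, sub_self]
  have hC := eq_C_of_derivative_eq_zero h0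
  have h2 : ∫ x in (-1:ℝ)..1, (P - Q).eval x = 0 := by
    simp only [eval_sub]
    rw [intervalIntegral.integral_sub (P.continuous.intervalIntegrable _ _)
      (Q.continuous.intervalIntegrable _ _), hi, sub_self]
  rw [hC] at h2
  simp only [eval_C, intervalIntegral.integral_const, smul_eq_mul] at h2
  have hc : (P - Q).coeff 0 = 0 := by norm_num at h2; rw [Polynomial.coeff_sub]; linarith
  have h3 : P - Q = 0 := by rw [hC, hc, map_zero]
  exact sub_eq_zero.mp h3

private lemma polypar (F : ℕ → Polynomial ℝ) (hF0 : F 0 = X)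
    (hFd : ∀ k, derivative (F (k+1)) = F k)
    (hFi : ∀ k, ∫ x in (-1:ℝ)..1, (F (k+1)).eval x = 0) :
    ∀ j, (F j).comp (-X) = C ((-1:ℝ)^(j+1)) * F j := by
  intro j
  induction j with
  | zero => rw [hF0]; simp
  | succ j ih =>
    have hsq : ((-1:ℝ)^(j+1+1)) * ((-1:ℝ)^(j+1+1)) = 1 := by
      rw [← pow_add]; exact Even.neg_one_pow ⟨j+2, by ring⟩
    have key : F (j+1) = C ((-1:ℝ)^(j+2)) * (F (j+1)).comp (-X) := by
      apply polyuniq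
      · rw [derivative_C_mul, derivative_comp, hFd j, ih]
        rw [derivative_neg, derivative_X]
        rw [show (-1 : ℝ[X]) = C (-1) by simp]
        rw [← mul_assoc, ← mul_assoc, ← map_mul, ← map_mul]
        rw [show ((-1:ℝ)^(j+2) * -1 * (-1)^(j+1)) = 1 from by
          rw [mul_assoc, ← pow_succ']; exact hsq]
        rw [map_one, one_mul]
      · rw [hFi j]
        simp only [eval_mul, eval_C, eval_comp, eval_neg, eval_X]
        rw [intervalIntegral.integral_const_mul]
        rw [show (∫ x in (-1:ℝ)..1, eval (-x) (F (j+1))) = ∫ x in (-(1:ℝ))..(-(-1:ℝ)), eval x (F (j+1)) from intervalIntegral.integral_comp_neg (fun x => eval x (F (j+1)))]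
        norm_num [hFi j]
    calc (F (j+1)).comp (-X)
        = C ((-1:ℝ)^(j+2)) * (C ((-1:ℝ)^(j+2)) * (F (j+1)).comp (-X)) := by
          rw [← mul_assoc, ← map_mul, hsq, map_one, one_mul]
      _ = C ((-1:ℝ)^(j+1+1)) * F (j+1) := by rw [← key]

private lemma Feval0 (F : ℕ → Polynomial ℝ) (hF0 : F 0 = X)
    (hFd : ∀ k, derivative (F (k+1)) = F k)
    (hFi : ∀ k, ∫ x in (-1:ℝ)..1, (F (k+1)).eval x = 0)
    (j : ℕ) (hj : Even j) : (F j).eval 0 = 0 := by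
  have h := congrArg (eval (0:ℝ)) (polypar F hF0 hFd hFi j)
  simp only [eval_comp, eval_neg, eval_X, neg_zero, eval_mul, eval_C] at h
  rw [Odd.neg_one_pow (by exact Even.add_one hj)] at h
  linarith

private lemma Fdiff0 (F : ℕ → Polynomial ℝ)
    (hFd : ∀ k, derivative (F (k+1)) = F k)
    (hFi : ∀ k, ∫ x in (-1:ℝ)..1, (F (k+1)).eval x = 0)
    (i : ℕ) : (F (i+2)).eval 1 = (F (i+2)).eval (-1) := by
  have h := polyint (F (i+2)) (-1) 1
  rw [hFd (i+1), hFi i] at h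
  linarith

private lemma hasDerivAt_iteratedDeriv {e : ℝ → ℝ} {U : Set ℝ} (hU : IsOpen U)
    {n : ℕ} (hcd : ContDiffOn ℝ (n : ℕ∞) e U) {j : ℕ} (hj : j < n) {x : ℝ} (hx : x ∈ U) :
    HasDerivAt (iteratedDeriv j e) (iteratedDeriv (j+1) e x) x := by
  have heq : Set.EqOn (iteratedDerivWithin j e U) (iteratedDeriv j e) U := fun y hy => by
    simp only [iteratedDerivWithin_eq_iteratedFDerivWithin, iteratedDeriv_eq_iteratedFDeriv,
      iteratedFDerivWithin_of_isOpen j hU hy]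
  have h1 : DifferentiableWithinAt ℝ (iteratedDerivWithin j e U) U x :=
    hcd.differentiableOn_iteratedDerivWithin (by exact_mod_cast hj) hU.uniqueDiffOn x hx
  have h2 : DifferentiableAt ℝ (iteratedDerivWithin j e U) x :=
    h1.differentiableAt (hU.mem_nhds hx)
  have h3 : DifferentiableAt ℝ (iteratedDeriv j e) x :=
    h2.congr_of_eventuallyEq (Filter.eventuallyEq_of_mem (hU.mem_nhds hx) heq).symm
  have h4 := h3.hasDerivAt
  rwa [← iteratedDeriv_succ] at h4

private lemma continuousOn_iteratedDeriv_of_isOpen {e : ℝ → ℝ} {U : Set ℝ} (hU : IsOpen U)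
    {n : ℕ} (hcd : ContDiffOn ℝ (n : ℕ∞) e U) {j : ℕ} (hj : j ≤ n) :
    ContinuousOn (iteratedDeriv j e) U := by
  have heq : Set.EqOn (iteratedDerivWithin j e U) (iteratedDeriv j e) U := fun y hy => by
    simp only [iteratedDerivWithin_eq_iteratedFDerivWithin, iteratedDeriv_eq_iteratedFDeriv,
      iteratedFDerivWithin_of_isOpen j hU hy]
  exact (hcd.continuousOn_iteratedDerivWithin (by exact_mod_cast hj) hU.uniqueDiffOn).congr
    heq.symm

theorem stmt15 (F : ℕ → Polynomial ℝ)
    (hF0 : F 0 = Polynomial.X)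
    (hFd : ∀ k : ℕ, Polynomial.derivative (F (k + 1)) = F k)
    (hFi : ∀ k : ℕ, ∫ x in (-1 : ℝ)..1, (F (k + 1)).eval x = 0)
    (k : ℕ) (hk : 2 ≤ k) (σ : ℝ) (hσ0 : 0 < σ) (hσ1 : σ ≤ 1) :
    ∃ C : ℝ, 0 < C ∧
      ∀ h : ℝ, 0 < h → h ≤ 1 →
      ∀ (a : ℝ) (e : ℝ → ℝ) (U : Set ℝ), IsOpen U → Set.Icc a (a + h) ⊆ U →
        ContDiffOn ℝ ((k + 2 : ℕ) : ℕ∞) e U →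
      ∀ M : ℝ, 0 ≤ M →
        (∀ y ∈ Set.Icc a (a + h), |iteratedDeriv (k + 2) e y| ≤ M) →
        (∀ s : ℕ, s ≤ k - 1 → Even (k - s) →
          |iteratedDeriv s e a| ≤ M * h ^ ((k : ℝ) + 1 + σ - s) ∧
          |iteratedDeriv s e (a + h)| ≤ M * h ^ ((k : ℝ) + 1 + σ - s)) →
        (∀ s : ℕ, s ≤ k → Even (k - s) →
          |iteratedDeriv s e (a + h / 2)| ≤ M * h ^ ((k : ℝ) + 1 + σ - s)) →
      ∃ γ : ℝ, ∀ s : ℕ, s ≤ k → (Odd k → 1 ≤ s) →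
        ∀ x ∈ Set.Icc a (a + h),
          |iteratedDeriv s e x
              - γ * (2 / h) ^ s * (F (k - s)).eval (2 * (x - a) / h - 1)|
            ≤ C * M * h ^ ((k : ℝ) + 1 + σ - s) := by
  classical
  refine ⟨3 ^ (k + 2), by positivity, ?_⟩
  intro h h0 h1 a e U hU hIU hcd M hM hi hii hiii
  set I : Set ℝ := Set.Icc a (a + h) with hIdef
  have hne : h ≠ 0 := ne_of_gt h0
  set m : ℝ := a + h / 2 with hmdef
  have hmI : m ∈ I := ⟨by simp [hmdef]; linarith, by simp [hmdef]; linarith⟩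
  have haI : a ∈ I := ⟨le_refl a, by linarith⟩
  have hbI : a + h ∈ I := ⟨by linarith, le_refl _⟩
  have hdiam : ∀ {x y : ℝ}, x ∈ I → y ∈ I → |x - y| ≤ h := by
    intro x y hx hy
    rw [abs_sub_le_iff]
    constructor <;> [skip; skip] <;>
      · have h1x := hx.1; have h2x := hx.2; have h1y := hy.1; have h2y := hy.2
        simp only [hIdef] at *; linarith
  have husub : ∀ {x y : ℝ}, x ∈ I → y ∈ I → Set.uIcc y x ⊆ I := fun hx hy =>
    Set.uIcc_subset_Icc hy hx
  -- the extended family of polynomials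
  set FF : ℕ → Polynomial ℝ := fun j => Nat.rec 1 (fun i _ => F i) j with hFFdef
  have hFFs : ∀ j, FF (j + 1) = F j := fun j => rfl
  have hFF0 : FF 0 = 1 := rfl
  have hFFd : ∀ j, Polynomial.derivative (FF (j + 1)) = FF j := by
    intro j
    cases j with
    | zero => rw [hFFs, hF0]; simp [hFF0]
    | succ i => rw [hFFs, hFd i, hFFs]
  -- the affine map
  set t : ℝ → ℝ := fun x => 2 * (x - a) / h - 1 with htdef
  have htm : t m = 0 := by simp only [htdef, hmdef]; field_simp; ring
  have htd : ∀ x : ℝ, HasDerivAt t (2 / h) x := by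
    intro x
    have h2 : HasDerivAt (fun x : ℝ => 2 * (x - a) / h - 1) (2 * 1 / h) x :=
      ((((hasDerivAt_id x).sub_const a).const_mul 2).div_const h).sub_const 1
    rw [mul_one] at h2; exact h2
  have htc : Continuous t := by
    exact ((continuous_const.mul (continuous_id.sub continuous_const)).div_const h).sub
      continuous_const
  have hpd : ∀ (j : ℕ) (x : ℝ),
      HasDerivAt (fun y => (FF (j + 1)).eval (t y)) ((2 / h) * (FF j).eval (t x)) x := by
    intro j x
    have h2 := ((FF (j + 1)).hasDerivAt (t x)).comp x (htd x)
    rw [hFFd j, mul_comm] at h2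
    exact h2
  -- gamma and the error functions
  set γ : ℝ := iteratedDeriv (k + 1) e m * (h / 2) ^ (k + 1) with hγdef
  set g : ℕ → ℝ → ℝ :=
    fun s x => iteratedDeriv s e x - γ * (2 / h) ^ s * (FF (k + 1 - s)).eval (t x) with hgdef
  -- derivatives of iterated derivatives of e
  have hE : ∀ j : ℕ, j ≤ k + 1 → ∀ x ∈ U,
      HasDerivAt (iteratedDeriv j e) (iteratedDeriv (j + 1) e x) x := by
    intro j hj x hx
    exact hasDerivAt_iteratedDeriv hU hcd (by omega) hx
  have hgd : ∀ s : ℕ, s ≤ k → ∀ x ∈ U, HasDerivAt (g s) (g (s + 1) x) x := by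
    intro s hs x hx
    have h2 : k + 1 - s = (k - s) + 1 := by omega
    have h3 : k + 1 - (s + 1) = k - s := by omega
    have h4 := (hpd (k - s) x).const_mul (γ * (2 / h) ^ s)
    have h5 := (hE s (by omega) x hx).sub h4
    simp only [hgdef, h2, h3]
    refine HasDerivAt.congr_deriv h5 ?_
    rw [pow_succ]
    ring
  have htop : ∀ x ∈ U, HasDerivAt (g (k + 1)) (iteratedDeriv (k + 2) e x) x := by
    intro x hx
    have h2 : k + 1 - (k + 1) = 0 := by omega
    have h1 := hE (k + 1) (le_refl _) x hx
    simp only [hgdef, h2, hFF0, Polynomial.eval_one, mul_one]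
    exact h1.sub_const _
  -- continuity of the g's
  have hgc : ∀ j : ℕ, j ≤ k + 1 → ContinuousOn (g j) U := by
    intro j hj
    simp only [hgdef]
    exact (continuousOn_iteratedDeriv_of_isOpen hU hcd (by omega)).sub
      (continuous_const.mul ((FF (k + 1 - j)).continuous.comp htc)).continuousOn
  -- fundamental theorem of calculus for the g's
  have hftc : ∀ s : ℕ, s ≤ k → ∀ {x y : ℝ}, x ∈ I → y ∈ I →
      ∫ u in y..x, g (s + 1) u = g s x - g s y := by
    intro s hs x y hx hy
    exact integral_eq_sub_of_hasDerivAt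
      (fun u hu => hgd s hs u (hIU (husub hx hy hu)))
      (((hgc (s + 1) (by omega)).mono ((husub hx hy).trans hIU)).intervalIntegrable)
  -- base bound at level k+1
  have hg0m : g (k + 1) m = 0 := by
    have h2 : k + 1 - (k + 1) = 0 := by omega
    have h3 : (h / 2) ^ (k + 1) * (2 / h) ^ (k + 1) = 1 := by
      rw [← mul_pow]; field_simp; exact one_pow _
    simp only [hgdef, h2, hFF0, Polynomial.eval_one, mul_one, hγdef]
    rw [mul_assoc, h3, mul_one, sub_self]
  have hB0 : ∀ x ∈ I, |g (k + 1) x| ≤ M * h := by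
    intro x hx
    have hint : ∫ u in m..x, iteratedDeriv (k + 2) e u = g (k + 1) x - g (k + 1) m :=
      integral_eq_sub_of_hasDerivAt (fun u hu => htop u (hIU (husub hx hmI hu)))
        (((continuousOn_iteratedDeriv_of_isOpen hU hcd (le_refl _)).mono
          ((husub hx hmI).trans hIU)).intervalIntegrable)
    have hb : |∫ u in m..x, iteratedDeriv (k + 2) e u| ≤ M * |x - m| := by
      rw [← Real.norm_eq_abs]
      exact intervalIntegral.norm_integral_le_of_norm_le_const
        (fun u hu => by
          rw [Real.norm_eq_abs]
          exact hi u (husub hx hmI (Set.uIoc_subset_uIcc hu)))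
    rw [hint, hg0m, sub_zero] at hb
    calc |g (k + 1) x| ≤ M * |x - m| := hb
      _ ≤ M * h := mul_le_mul_of_nonneg_left (hdiam hx hmI) hM
  -- rpow facts
  have hrp : ∀ s : ℕ, h ^ ((k : ℝ) + 1 + σ - s) = h ^ ((k : ℝ) + 1 + σ - (s + 1 : ℕ)) * h := by
    intro s
    rw [show ((k : ℝ) + 1 + σ - s) = ((k : ℝ) + 1 + σ - (s + 1 : ℕ)) + 1 by push_cast; ring,
      Real.rpow_add h0, Real.rpow_one]
  have hpos : ∀ s : ℕ, (0 : ℝ) < h ^ ((k : ℝ) + 1 + σ - s) :=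
    fun s => Real.rpow_pos_of_pos h0 _
  -- the master downward induction
  have main : ∀ d : ℕ, ∀ s : ℕ, s + d = k + 1 → (Odd k → 1 ≤ s) →
      ∀ x ∈ I, |g s x| ≤ 3 ^ d * (M * h ^ ((k : ℝ) + 1 + σ - s)) := by
    intro d
    induction d with
    | zero =>
      intro s hs _ x hx
      have hsk : s = k + 1 := by omega
      subst hsk
      have h2 : ((k : ℝ) + 1 + σ - ((k + 1 : ℕ) : ℝ)) = σ := by push_cast; ring
      rw [h2]
      have h4 : h ≤ h ^ σ := by
        calc h = h ^ (1 : ℝ) := (Real.rpow_one h).symm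
          _ ≤ h ^ σ := Real.rpow_le_rpow_of_exponent_ge h0 h1 hσ1
      calc |g (k + 1) x| ≤ M * h := hB0 x hx
        _ ≤ M * h ^ σ := mul_le_mul_of_nonneg_left h4 hM
        _ = 3 ^ 0 * (M * h ^ σ) := by ring
    | succ d ih =>
      intro s hs hguard x hx
      have hsk : s ≤ k := by omega
      have ihs : ∀ y ∈ I, |g (s + 1) y| ≤ 3 ^ d * (M * h ^ ((k : ℝ) + 1 + σ - (s + 1 : ℕ))) :=
        ih (s + 1) (by omega) (fun _ => by omega)
      have hosc : ∀ y ∈ I, |g s x - g s y|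
          ≤ 3 ^ d * (M * h ^ ((k : ℝ) + 1 + σ - (s + 1 : ℕ))) * h := by
        intro y hy
        have h8 := hftc s hsk hx hy
        rw [← h8, ← Real.norm_eq_abs]
        calc ‖∫ u in y..x, g (s + 1) u‖
            ≤ 3 ^ d * (M * h ^ ((k : ℝ) + 1 + σ - (s + 1 : ℕ))) * |x - y| :=
              intervalIntegral.norm_integral_le_of_norm_le_const
                (fun u hu => by
                  rw [Real.norm_eq_abs]
                  exact ihs u (husub hx hy (Set.uIoc_subset_uIcc hu)))
          _ ≤ 3 ^ d * (M * h ^ ((k : ℝ) + 1 + σ - (s + 1 : ℕ))) * h := by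
              apply mul_le_mul_of_nonneg_left (hdiam hx hy)
              positivity
      by_cases hpar : Even (k - s)
      · -- midpoint case
        have h6 : k + 1 - s = (k - s) + 1 := by omega
        have h5 : g s m = iteratedDeriv s e m := by
          simp only [hgdef, h6, hFFs, htm]
          rw [Feval0 F hF0 hFd hFi (k - s) hpar, mul_zero, sub_zero]
        have h7 : |g s m| ≤ M * h ^ ((k : ℝ) + 1 + σ - s) := by
          rw [h5]; exact hiii s hsk hpar
        have h9 := hosc m hmI
        calc |g s x| ≤ |g s m| + |g s x - g s m| := by
              have := abs_sub_abs_le_abs_sub (g s x) (g s m); linarith [abs_sub_comm (g s x) (g s m)]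
          _ ≤ M * h ^ ((k : ℝ) + 1 + σ - s)
              + 3 ^ d * (M * h ^ ((k : ℝ) + 1 + σ - (s + 1 : ℕ))) * h := by
              gcongr
          _ = (1 + 3 ^ d) * (M * h ^ ((k : ℝ) + 1 + σ - s)) := by
              rw [hrp s]; ring
          _ ≤ 3 ^ (d + 1) * (M * h ^ ((k : ℝ) + 1 + σ - s)) := by
              have hb : (1 : ℝ) + 3 ^ d ≤ 3 ^ (d + 1) := by
                have : (1 : ℝ) ≤ 3 ^ d := one_le_pow₀ (by norm_num)
                rw [pow_succ]; nlinarith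
              have hnn : (0 : ℝ) ≤ M * h ^ ((k : ℝ) + 1 + σ - s) := by positivity
              exact mul_le_mul_of_nonneg_right hb hnn
      · -- mean-value (odd) case
        have hs1 : 1 ≤ s := by
          by_contra hc
          push_neg at hc
          have hs0 : s = 0 := by omega
          subst hs0
          rw [Nat.sub_zero] at hpar
          exact absurd (hguard (Nat.not_even_iff_odd.mp hpar)) (by omega)
        obtain ⟨s', rfl⟩ : ∃ s', s = s' + 1 := ⟨s - 1, by omega⟩
        have hsk' : s' + 2 ≤ k := by
          rcases Nat.lt_or_ge (s' + 1) k with h' | h'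
          · omega
          · exfalso; have : k - (s' + 1) = 0 := by omega
            rw [this] at hpar; exact hpar Even.zero
        -- the polynomial has zero mean over I
        obtain ⟨i, hi2⟩ : ∃ i, k - s' - 1 = i + 1 := ⟨k - s' - 2, by omega⟩
        have hIpoly : ∫ u in a..(a + h), (FF (k + 1 - (s' + 1))).eval (t u) = 0 := by
          have hki : k + 1 - (s' + 1) = (i + 1) + 1 := by omega
          rw [hki, hFFs]
          have hAd : ∀ u : ℝ, HasDerivAt (fun y => (h / 2) * (F (i + 2)).eval (t y))
              ((F (i + 1)).eval (t u)) u := by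
            intro u
            have h2 := (((F (i + 2)).hasDerivAt (t u)).comp u (htd u)).const_mul (h / 2)
            rw [hFd (i + 1)] at h2
            refine HasDerivAt.congr_deriv h2 ?_
            rw [mul_left_comm, div_mul_div_comm, mul_comm h 2, div_self (by positivity), mul_one]
          have h3 : ∫ u in a..(a + h), (F (i + 1)).eval (t u)
              = (h / 2) * (F (i + 2)).eval (t (a + h)) - (h / 2) * (F (i + 2)).eval (t a) :=
            integral_eq_sub_of_hasDerivAt (fun u _ => hAd u)
              (((F (i + 1)).continuous.comp htc).intervalIntegrable _ _)
          have hta : t a = -1 := by simp only [htdef]; field_simp; ring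
          have htb : t (a + h) = 1 := by simp only [htdef]; field_simp; norm_num; ring
          rw [h3, hta, htb, Fdiff0 F hFd hFi i]
          ring
        -- integral of g s over I
        have hIint : ∫ u in a..(a + h), g (s' + 1) u
            = iteratedDeriv s' e (a + h) - iteratedDeriv s' e a := by
          have h1 : ∫ u in a..(a + h), iteratedDeriv (s' + 1) e u
              = iteratedDeriv s' e (a + h) - iteratedDeriv s' e a :=
            integral_eq_sub_of_hasDerivAt
              (fun u hu => hE s' (by omega) u (hIU (husub hbI haI hu)))
              (((continuousOn_iteratedDeriv_of_isOpen hU hcd (by omega)).mono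
                ((husub hbI haI).trans hIU)).intervalIntegrable)
          have hsub : ∀ u : ℝ, g (s' + 1) u = iteratedDeriv (s' + 1) e u
              - γ * (2 / h) ^ (s' + 1) * (FF (k + 1 - (s' + 1))).eval (t u) := fun u => rfl
          have hA1 : IntervalIntegrable (iteratedDeriv (s' + 1) e)
              MeasureTheory.volume a (a + h) :=
            ((continuousOn_iteratedDeriv_of_isOpen hU hcd
              (show s' + 1 ≤ k + 2 by omega)).mono
              ((husub hbI haI).trans hIU)).intervalIntegrable
          have hA2 : IntervalIntegrable
              (fun u => γ * (2 / h) ^ (s' + 1) * (FF (k + 1 - (s' + 1))).eval (t u))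
              MeasureTheory.volume a (a + h) :=
            ((continuous_const.mul
              ((FF (k + 1 - (s' + 1))).continuous.comp htc)).intervalIntegrable _ _)
          simp only [hsub]
          rw [intervalIntegral.integral_sub hA1 hA2,
            h1, intervalIntegral.integral_const_mul, hIpoly, mul_zero, sub_zero]
        -- endpoint bounds
        have hev : Even (k - s') := by
          have hodd : Odd (k - (s' + 1)) := Nat.not_even_iff_odd.mp hpar
          obtain ⟨w, hw⟩ := hodd
          exact ⟨w + 1, by omega⟩
        have hend := hii s' (by omega) hev
        have hIbnd : |∫ u in a..(a + h), g (s' + 1) u|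
            ≤ 2 * (M * h ^ ((k : ℝ) + 1 + σ - (s' + 1 : ℕ))) * h := by
          rw [hIint]
          have h2 := hrp s'
          calc |iteratedDeriv s' e (a + h) - iteratedDeriv s' e a|
              ≤ |iteratedDeriv s' e (a + h)| + |iteratedDeriv s' e a| := abs_sub _ _
            _ ≤ M * h ^ ((k : ℝ) + 1 + σ - s') + M * h ^ ((k : ℝ) + 1 + σ - s') := by
                gcongr; exacts [hend.2, hend.1]
            _ = 2 * (M * h ^ ((k : ℝ) + 1 + σ - (s' + 1 : ℕ))) * h := by rw [h2]; ring
        -- averaging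
        have hconst : ∫ (_ : ℝ) in a..(a + h), g (s' + 1) x = h * g (s' + 1) x := by
          rw [intervalIntegral.integral_const]
          simp
        have hintg : IntervalIntegrable (g (s' + 1)) MeasureTheory.volume a (a + h) :=
          ((hgc (s' + 1) (by omega)).mono ((husub hbI haI).trans hIU)).intervalIntegrable
        have havg : ∫ u in a..(a + h), (g (s' + 1) x - g (s' + 1) u)
            = h * g (s' + 1) x - ∫ u in a..(a + h), g (s' + 1) u := by
          rw [intervalIntegral.integral_sub intervalIntegrable_const hintg, hconst]
        have hkey : |h * g (s' + 1) x - ∫ u in a..(a + h), g (s' + 1) u|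
            ≤ (3 ^ d * (M * h ^ ((k : ℝ) + 1 + σ - (s' + 1 + 1 : ℕ))) * h) * h := by
          rw [← havg, ← Real.norm_eq_abs]
          have h3 := intervalIntegral.norm_integral_le_of_norm_le_const
            (C := 3 ^ d * (M * h ^ ((k : ℝ) + 1 + σ - (s' + 1 + 1 : ℕ))) * h)
            (f := fun u => g (s' + 1) x - g (s' + 1) u) (a := a) (b := a + h)
            (fun u hu => by
              rw [Real.norm_eq_abs]
              exact hosc u (husub hbI haI (Set.uIoc_subset_uIcc hu)))
          calc ‖∫ u in a..(a + h), (g (s' + 1) x - g (s' + 1) u)‖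
              ≤ 3 ^ d * (M * h ^ ((k : ℝ) + 1 + σ - (s' + 1 + 1 : ℕ))) * h * |a + h - a| := h3
            _ = 3 ^ d * (M * h ^ ((k : ℝ) + 1 + σ - (s' + 1 + 1 : ℕ))) * h * h := by
                rw [show a + h - a = h by ring, abs_of_pos h0]
        -- combine
        have hfin : h * |g (s' + 1) x|
            ≤ (2 + 3 ^ d) * (M * h ^ ((k : ℝ) + 1 + σ - (s' + 1 : ℕ))) * h := by
          have h4 : |h * g (s' + 1) x| ≤ |∫ u in a..(a + h), g (s' + 1) u|
              + |h * g (s' + 1) x - ∫ u in a..(a + h), g (s' + 1) u| := by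
            have := abs_sub_abs_le_abs_sub (h * g (s' + 1) x)
              (∫ u in a..(a + h), g (s' + 1) u)
            linarith
          rw [abs_mul, abs_of_pos h0] at h4
          have h5 := hrp (s' + 1)
          calc h * |g (s' + 1) x|
              ≤ 2 * (M * h ^ ((k : ℝ) + 1 + σ - (s' + 1 : ℕ))) * h
                + 3 ^ d * (M * h ^ ((k : ℝ) + 1 + σ - (s' + 1 + 1 : ℕ))) * h * h := by
                linarith [hIbnd, hkey]
            _ = (2 + 3 ^ d) * (M * h ^ ((k : ℝ) + 1 + σ - (s' + 1 : ℕ))) * h := by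
                rw [h5]; ring
        have h6 : |g (s' + 1) x| ≤ (2 + 3 ^ d) * (M * h ^ ((k : ℝ) + 1 + σ - (s' + 1 : ℕ))) :=
          le_of_mul_le_mul_left (by linarith [hfin]) h0
        calc |g (s' + 1) x| ≤ (2 + 3 ^ d) * (M * h ^ ((k : ℝ) + 1 + σ - (s' + 1 : ℕ))) := h6
          _ ≤ 3 ^ (d + 1) * (M * h ^ ((k : ℝ) + 1 + σ - (s' + 1 : ℕ))) := by
              have hb : (2 : ℝ) + 3 ^ d ≤ 3 ^ (d + 1) := by
                have : (1 : ℝ) ≤ 3 ^ d := one_le_pow₀ (by norm_num)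
                rw [pow_succ]; nlinarith
              have hnn : (0 : ℝ) ≤ M * h ^ ((k : ℝ) + 1 + σ - (s' + 1 : ℕ)) := by positivity
              exact mul_le_mul_of_nonneg_right hb hnn
  -- conclusion
  refine ⟨γ, ?_⟩
  intro s hsk hguard x hx
  have h6 : k + 1 - s = (k - s) + 1 := by omega
  have hmain := main (k + 1 - s) s (by omega) hguard x hx
  simp only [hgdef, h6, hFFs, htdef] at hmain
  calc |iteratedDeriv s e x - γ * (2 / h) ^ s * (F (k - s)).eval (2 * (x - a) / h - 1)|
      ≤ 3 ^ (k - s + 1) * (M * h ^ ((k : ℝ) + 1 + σ - s)) := hmain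
    _ ≤ 3 ^ (k + 2) * M * h ^ ((k : ℝ) + 1 + σ - s) := by
        have hb : (3 : ℝ) ^ (k - s + 1) ≤ 3 ^ (k + 2) :=
          pow_le_pow_right₀ (by norm_num) (by omega)
        have hnn : (0 : ℝ) ≤ M * h ^ ((k : ℝ) + 1 + σ - s) := by positivity
        calc 3 ^ (k - s + 1) * (M * h ^ ((k : ℝ) + 1 + σ - s))
            ≤ 3 ^ (k + 2) * (M * h ^ ((k : ℝ) + 1 + σ - s)) :=
              mul_le_mul_of_nonneg_right hb hnn
          _ = 3 ^ (k + 2) * M * h ^ ((k : ℝ) + 1 + σ - s) := by ring
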